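/- arXiv:2103.03177 — 2 statements merged into one kernel-verified Lean document; each statement's English description precedes it below -/
import Mathlib

section
/- Let B₁, B₂ be Banach spaces and G : B₁ → B₂ a differentiable map whose derivative at 0 is surjective with bounded right inverse P. Let δ' be the radius of a closed ball about 0 on which G − dG(0) is Lipschitz with constant 1/(2‖P‖), and set δ = δ'/(2‖P‖). Then for every y ∈ B₂ with ‖y − G(0)‖ < δ, there exists x ∈ B₁ with ‖x‖ ≤ δ' and G(x) = y. -/
/-- Theorem 3.31 (quantitative inverse function theorem): if `G : B₁ → B₂` is
differentiable with derivative at `0` surjective with bounded right inverse `P`,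
and `G - dG(0)` is Lipschitz with constant `1/(2‖P‖)` on the closed ball of radius
`δ'`, then every `y` with `‖y - G 0‖ < δ := δ'/(2‖P‖)` is of the form `y = G x`
with `‖x‖ ≤ δ'`. -/
theorem stmt_9 {B₁ B₂ : Type*} [NormedAddCommGroup B₁] [NormedSpace ℝ B₁] [CompleteSpace B₁]
    [NormedAddCommGroup B₂] [NormedSpace ℝ B₂] [CompleteSpace B₂]
    (G : B₁ → B₂) (hG : Differentiable ℝ G) (f' : B₁ →L[ℝ] B₂)
    (hd : HasFDerivAt G f' 0) (P : B₂ →L[ℝ] B₁)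
    (hP : f'.comp P = ContinuousLinearMap.id ℝ B₂) (hPnorm : 0 < ‖P‖)
    (δ' : ℝ) (hδ' : 0 < δ')
    (hLip : ∀ x ∈ Metric.closedBall (0 : B₁) δ', ∀ x' ∈ Metric.closedBall (0 : B₁) δ',
      ‖(G x - f' x) - (G x' - f' x')‖ ≤ (1 / (2 * ‖P‖)) * ‖x - x'‖) :
    ∀ y : B₂, ‖y - G 0‖ < δ' / (2 * ‖P‖) → ∃ x : B₁, ‖x‖ ≤ δ' ∧ G x = y := by
  intro y hy
  have hPn : (0 : NNReal) < ‖P‖₊ := by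
    exact_mod_cast hPnorm
  set fsymm : f'.NonlinearRightInverse :=
    { toFun := P
      nnnorm := ‖P‖₊
      bound' := fun y => P.le_opNorm y
      right_inv' := fun y => by
        have := DFunLike.congr_fun hP y
        simpa using this }
  set c : NNReal := ‖P‖₊⁻¹ / 2 with hc
  have hcr : (c : ℝ) = 1 / (2 * ‖P‖) := by
    simp [hc]
    rw [div_eq_mul_inv]
  have hf : ApproximatesLinearOn G f' (Metric.closedBall (0 : B₁) δ') c := by
    intro x hx x' hx'
    have := hLip x hx x' hx'
    rw [hcr]
    calc ‖G x - G x' - f' (x - x')‖ = ‖(G x - f' x) - (G x' - f' x')‖ := by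
          rw [map_sub]; congr 1; abel
      _ ≤ (1 / (2 * ‖P‖)) * ‖x - x'‖ := this
  have hsurj := hf.surjOn_closedBall_of_nonlinearRightInverse fsymm hδ'.le subset_rfl
  have hmem : y ∈ Metric.closedBall (G 0) (((fsymm.nnnorm : ℝ)⁻¹ - c) * δ') := by
    rw [Metric.mem_closedBall, dist_eq_norm]
    have : ((fsymm.nnnorm : ℝ)⁻¹ - c) * δ' = δ' / (2 * ‖P‖) := by
      have : (fsymm.nnnorm : ℝ) = ‖P‖ := rfl
      rw [this, hcr]
      field_simp
      ring
    rw [this]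
    exact hy.le
  obtain ⟨x, hx, hGx⟩ := hsurj hmem
  exact ⟨x, by simpa using Metric.mem_closedBall.1 hx, hGx⟩
end

section
/- Let M(ε) be the 2×2 real matrix [[λ₁·ε^{p₁/2} + a(ε), b(ε)], [c(ε), γ₁·ε^{p₂/2} + d(ε)]] where λ₁, γ₁ > 0, p₁ ≤ p₂ are natural numbers, |a(ε)| ≤ C·ε^{(p₁+1)/2}, |d(ε)| ≤ C·ε^{(p₂+1)/2}, |b(ε)| ≤ C·ε^{p₁+1}, |c(ε)| ≤ C·ε^{p₂+1}. Then for all sufficiently small ε > 0, M(ε) is invertible, and there is a constant K with ‖M(ε)⁻¹‖ ≤ K·ε^{−p₂/2}. -/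
/-- The 2×2 matrix appearing in the finite-dimensional linearization bound. -/
noncomputable def linMatrix (p₁ p₂ : ℕ) (l g : ℝ) (a b c d : ℝ → ℝ) (ε : ℝ) :
    Matrix (Fin 2) (Fin 2) ℝ :=
  !![l * ε ^ ((p₁ : ℝ) / 2) + a ε, b ε; c ε, g * ε ^ ((p₂ : ℝ) / 2) + d ε]

set_option maxHeartbeats 800000 in
/-- Linearization bound from Section 3.5: the matrix
`[[λ₁·ε^{p₁/2} + O(ε^{(p₁+1)/2}), O(ε^{p₁+1})], [O(ε^{p₂+1}), γ₁·ε^{p₂/2} + O(ε^{(p₂+1)/2})]]`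
is invertible for small `ε > 0`, with inverse (entrywise) bounded by `K·ε^{-p₂/2}`. -/
theorem stmt_12 (p₁ p₂ : ℕ) (hp : p₁ ≤ p₂) (l g C : ℝ)
    (hl : 0 < l) (hg : 0 < g) (hC : 0 < C) (a b c d : ℝ → ℝ)
    (ha : ∀ ε : ℝ, 0 < ε → ε ≤ 1 → |a ε| ≤ C * ε ^ (((p₁ : ℝ) + 1) / 2))
    (hd : ∀ ε : ℝ, 0 < ε → ε ≤ 1 → |d ε| ≤ C * ε ^ (((p₂ : ℝ) + 1) / 2))
    (hb : ∀ ε : ℝ, 0 < ε → ε ≤ 1 → |b ε| ≤ C * ε ^ ((p₁ : ℝ) + 1))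
    (hc : ∀ ε : ℝ, 0 < ε → ε ≤ 1 → |c ε| ≤ C * ε ^ ((p₂ : ℝ) + 1)) :
    ∃ ε₀ : ℝ, 0 < ε₀ ∧ ∃ K : ℝ, 0 < K ∧
      ∀ ε : ℝ, 0 < ε → ε < ε₀ →
        IsUnit (linMatrix p₁ p₂ l g a b c d ε) ∧
        ∀ i j : Fin 2, |(linMatrix p₁ p₂ l g a b c d ε)⁻¹ i j| ≤ K * ε ^ (-(p₂ : ℝ) / 2) := by
  have hpq : (p₁ : ℝ) ≤ (p₂ : ℝ) := Nat.cast_le.mpr hp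
  have hp₁0 : (0:ℝ) ≤ (p₁:ℝ) := Nat.cast_nonneg _
  have hp₂0 : (0:ℝ) ≤ (p₂:ℝ) := Nat.cast_nonneg _
  refine ⟨min 1 (min ((l/(2*C))^2) (min ((g/(2*C))^2) (l*g/(8*C^2)))), by positivity,
    (3/2*(l+g)+C)/(l*g/8), by positivity, ?_⟩
  intro ε hε hεlt
  have hε1 : ε ≤ 1 := le_of_lt (lt_of_lt_of_le hεlt (min_le_left _ _))
  have hεl : ε ≤ (l/(2*C))^2 :=
    le_of_lt (lt_of_lt_of_le hεlt ((min_le_right _ _).trans (min_le_left _ _)))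
  have hεg : ε ≤ (g/(2*C))^2 :=
    le_of_lt (lt_of_lt_of_le hεlt ((min_le_right _ _).trans
      ((min_le_right _ _).trans (min_le_left _ _))))
  have hεlg : ε ≤ l*g/(8*C^2) :=
    le_of_lt (lt_of_lt_of_le hεlt ((min_le_right _ _).trans
      ((min_le_right _ _).trans (min_le_right _ _))))
  -- square root bounds
  have hCl : C * ε ^ ((1:ℝ)/2) ≤ l/2 := by
    have hsq : ε ^ ((1:ℝ)/2) ≤ l/(2*C) := by
      rw [← Real.sqrt_eq_rpow]
      calc Real.sqrt ε ≤ Real.sqrt ((l/(2*C))^2) := Real.sqrt_le_sqrt hεl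
        _ = l/(2*C) := Real.sqrt_sq (by positivity)
    calc C * ε ^ ((1:ℝ)/2) ≤ C * (l/(2*C)) := by
          exact mul_le_mul_of_nonneg_left hsq hC.le
      _ = l/2 := by field_simp
  have hCg : C * ε ^ ((1:ℝ)/2) ≤ g/2 := by
    have hsq : ε ^ ((1:ℝ)/2) ≤ g/(2*C) := by
      rw [← Real.sqrt_eq_rpow]
      calc Real.sqrt ε ≤ Real.sqrt ((g/(2*C))^2) := Real.sqrt_le_sqrt hεg
        _ = g/(2*C) := Real.sqrt_sq (by positivity)
    calc C * ε ^ ((1:ℝ)/2) ≤ C * (g/(2*C)) := by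
          exact mul_le_mul_of_nonneg_left hsq hC.le
      _ = g/2 := by field_simp
  have hClg : C^2 * ε ≤ l*g/8 := by
    calc C^2 * ε ≤ C^2 * (l*g/(8*C^2)) := mul_le_mul_of_nonneg_left hεlg (by positivity)
      _ = l*g/8 := by field_simp
  -- bounds on entries
  have ha' : |a ε| ≤ l/2 * ε ^ ((p₁:ℝ)/2) := by
    calc |a ε| ≤ C * ε ^ (((p₁:ℝ)+1)/2) := ha ε hε hε1
      _ = (C * ε ^ ((1:ℝ)/2)) * ε ^ ((p₁:ℝ)/2) := by
          rw [show ((p₁:ℝ)+1)/2 = (1:ℝ)/2 + (p₁:ℝ)/2 by ring, Real.rpow_add hε]; ring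
      _ ≤ l/2 * ε ^ ((p₁:ℝ)/2) :=
          mul_le_mul_of_nonneg_right hCl (Real.rpow_nonneg hε.le _)
  have hd' : |d ε| ≤ g/2 * ε ^ ((p₂:ℝ)/2) := by
    calc |d ε| ≤ C * ε ^ (((p₂:ℝ)+1)/2) := hd ε hε hε1
      _ = (C * ε ^ ((1:ℝ)/2)) * ε ^ ((p₂:ℝ)/2) := by
          rw [show ((p₂:ℝ)+1)/2 = (1:ℝ)/2 + (p₂:ℝ)/2 by ring, Real.rpow_add hε]; ring
      _ ≤ g/2 * ε ^ ((p₂:ℝ)/2) :=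
          mul_le_mul_of_nonneg_right hCg (Real.rpow_nonneg hε.le _)
  have hεq2q1 : ε ^ ((p₂:ℝ)/2) ≤ ε ^ ((p₁:ℝ)/2) :=
    Real.rpow_le_rpow_of_exponent_ge hε hε1 (by linarith)
  have hb' : |b ε| ≤ C * ε ^ ((p₁:ℝ)/2) := by
    calc |b ε| ≤ C * ε ^ ((p₁:ℝ)+1) := hb ε hε hε1
      _ ≤ C * ε ^ ((p₁:ℝ)/2) := mul_le_mul_of_nonneg_left
          (Real.rpow_le_rpow_of_exponent_ge hε hε1 (by linarith)) hC.le
  have hc' : |c ε| ≤ C * ε ^ ((p₁:ℝ)/2) := by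
    calc |c ε| ≤ C * ε ^ ((p₂:ℝ)+1) := hc ε hε hε1
      _ ≤ C * ε ^ ((p₁:ℝ)/2) := mul_le_mul_of_nonneg_left
          (Real.rpow_le_rpow_of_exponent_ge hε hε1 (by linarith)) hC.le
  have hq1pos : (0:ℝ) < ε ^ ((p₁:ℝ)/2) := Real.rpow_pos_of_pos hε _
  have hq2pos : (0:ℝ) < ε ^ ((p₂:ℝ)/2) := Real.rpow_pos_of_pos hε _
  -- diagonal entries
  have hA_lo : l/2 * ε ^ ((p₁:ℝ)/2) ≤ l * ε ^ ((p₁:ℝ)/2) + a ε := by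
    have := abs_le.mp ha'; linarith
  have hD_lo : g/2 * ε ^ ((p₂:ℝ)/2) ≤ g * ε ^ ((p₂:ℝ)/2) + d ε := by
    have := abs_le.mp hd'; linarith
  have hA_abs : |l * ε ^ ((p₁:ℝ)/2) + a ε| ≤ (3/2*(l+g)+C) * ε ^ ((p₁:ℝ)/2) := by
    have h1 := abs_le.mp ha'
    rw [abs_le]
    constructor <;> linarith [mul_nonneg (by positivity : (0:ℝ) ≤ 3/2*g+C) hq1pos.le, h1.1, h1.2]
  have hD_abs : |g * ε ^ ((p₂:ℝ)/2) + d ε| ≤ (3/2*(l+g)+C) * ε ^ ((p₁:ℝ)/2) := by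
    have h1 := abs_le.mp hd'
    have h2 : 3/2*g * ε ^ ((p₂:ℝ)/2) ≤ 3/2*g * ε ^ ((p₁:ℝ)/2) :=
      mul_le_mul_of_nonneg_left hεq2q1 (by positivity)
    rw [abs_le]
    constructor <;> linarith [mul_nonneg (by positivity : (0:ℝ) ≤ 3/2*l+C) hq1pos.le,
      mul_nonneg (by positivity : (0:ℝ) ≤ g/2) hq2pos.le, h1.1, h1.2, h2]
  have hb_abs : |b ε| ≤ (3/2*(l+g)+C) * ε ^ ((p₁:ℝ)/2) := by
    calc |b ε| ≤ C * ε ^ ((p₁:ℝ)/2) := hb'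
      _ ≤ (3/2*(l+g)+C) * ε ^ ((p₁:ℝ)/2) := by
          linarith [mul_nonneg (by positivity : (0:ℝ) ≤ 3/2*(l+g)) hq1pos.le]
  have hc_abs : |c ε| ≤ (3/2*(l+g)+C) * ε ^ ((p₁:ℝ)/2) := by
    calc |c ε| ≤ C * ε ^ ((p₁:ℝ)/2) := hc'
      _ ≤ (3/2*(l+g)+C) * ε ^ ((p₁:ℝ)/2) := by
          linarith [mul_nonneg (by positivity : (0:ℝ) ≤ 3/2*(l+g)) hq1pos.le]
  -- determinant lower bound
  have hsumpos : (0:ℝ) < ε ^ ((p₁:ℝ)/2 + (p₂:ℝ)/2) := Real.rpow_pos_of_pos hε _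
  have hdet_lo : l*g/8 * ε ^ ((p₁:ℝ)/2 + (p₂:ℝ)/2) ≤
      (l * ε ^ ((p₁:ℝ)/2) + a ε) * (g * ε ^ ((p₂:ℝ)/2) + d ε) - b ε * c ε := by
    have hAD : (l/2 * ε ^ ((p₁:ℝ)/2)) * (g/2 * ε ^ ((p₂:ℝ)/2)) ≤
        (l * ε ^ ((p₁:ℝ)/2) + a ε) * (g * ε ^ ((p₂:ℝ)/2) + d ε) :=
      mul_le_mul hA_lo hD_lo (by positivity) (le_trans (by positivity) hA_lo)
    have hAD' : l*g/4 * ε ^ ((p₁:ℝ)/2 + (p₂:ℝ)/2) ≤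
        (l * ε ^ ((p₁:ℝ)/2) + a ε) * (g * ε ^ ((p₂:ℝ)/2) + d ε) := by
      rw [Real.rpow_add hε]; linarith [hAD]
    have hbc : |b ε * c ε| ≤ l*g/8 * ε ^ ((p₁:ℝ)/2 + (p₂:ℝ)/2) := by
      have h1 : |b ε * c ε| ≤ (C * ε ^ ((p₁:ℝ)+1)) * (C * ε ^ ((p₂:ℝ)+1)) := by
        rw [abs_mul]
        exact mul_le_mul (hb ε hε hε1) (hc ε hε hε1) (abs_nonneg _)
          (by positivity)
      have h2 : (C * ε ^ ((p₁:ℝ)+1)) * (C * ε ^ ((p₂:ℝ)+1)) =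
          C^2 * ε * (ε ^ ((p₁:ℝ)/2 + (p₂:ℝ)/2) * ε ^ ((p₁:ℝ)/2 + (p₂:ℝ)/2 + 1)) := by
        calc (C * ε ^ ((p₁:ℝ)+1)) * (C * ε ^ ((p₂:ℝ)+1))
            = C^2 * (ε ^ ((p₁:ℝ)+1) * ε ^ ((p₂:ℝ)+1)) := by ring
          _ = C^2 * ε ^ (((p₁:ℝ)+1) + ((p₂:ℝ)+1)) := by rw [← Real.rpow_add hε]
          _ = C^2 * ε ^ ((1:ℝ) + (((p₁:ℝ)/2 + (p₂:ℝ)/2) + ((p₁:ℝ)/2 + (p₂:ℝ)/2 + 1))) := by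
              congr 1; ring
          _ = C^2 * (ε ^ (1:ℝ) * (ε ^ ((p₁:ℝ)/2 + (p₂:ℝ)/2) * ε ^ ((p₁:ℝ)/2 + (p₂:ℝ)/2 + 1))) := by
              rw [Real.rpow_add hε, Real.rpow_add hε]
          _ = C^2 * ε * (ε ^ ((p₁:ℝ)/2 + (p₂:ℝ)/2) * ε ^ ((p₁:ℝ)/2 + (p₂:ℝ)/2 + 1)) := by
              rw [Real.rpow_one]; ring
      have h3 : ε ^ ((p₁:ℝ)/2 + (p₂:ℝ)/2 + 1) ≤ 1 := by
        calc ε ^ ((p₁:ℝ)/2 + (p₂:ℝ)/2 + 1) ≤ ε ^ (0:ℝ) :=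
            Real.rpow_le_rpow_of_exponent_ge hε hε1 (by linarith)
          _ = 1 := Real.rpow_zero ε
      calc |b ε * c ε| ≤ C^2 * ε * (ε ^ ((p₁:ℝ)/2 + (p₂:ℝ)/2) * ε ^ ((p₁:ℝ)/2 + (p₂:ℝ)/2 + 1)) := by
            rw [← h2]; exact h1
        _ ≤ C^2 * ε * (ε ^ ((p₁:ℝ)/2 + (p₂:ℝ)/2) * 1) := by
            apply mul_le_mul_of_nonneg_left _ (by positivity)
            exact mul_le_mul_of_nonneg_left h3 hsumpos.le
        _ = C^2 * ε * ε ^ ((p₁:ℝ)/2 + (p₂:ℝ)/2) := by ring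
        _ ≤ l*g/8 * ε ^ ((p₁:ℝ)/2 + (p₂:ℝ)/2) :=
            mul_le_mul_of_nonneg_right hClg hsumpos.le
    have := abs_le.mp hbc
    linarith [hAD', this.2]
  have hdet_pos : (0:ℝ) <
      (l * ε ^ ((p₁:ℝ)/2) + a ε) * (g * ε ^ ((p₂:ℝ)/2) + d ε) - b ε * c ε :=
    lt_of_lt_of_le (by positivity) hdet_lo
  have hdet_eq : (linMatrix p₁ p₂ l g a b c d ε).det =
      (l * ε ^ ((p₁:ℝ)/2) + a ε) * (g * ε ^ ((p₂:ℝ)/2) + d ε) - b ε * c ε := by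
    simp [linMatrix, Matrix.det_fin_two_of]
  refine ⟨(Matrix.isUnit_iff_isUnit_det _).mpr (isUnit_iff_ne_zero.mpr (by
    rw [hdet_eq]; exact ne_of_gt hdet_pos)), ?_⟩
  have hinv : (linMatrix p₁ p₂ l g a b c d ε)⁻¹ =
      ((l * ε ^ ((p₁:ℝ)/2) + a ε) * (g * ε ^ ((p₂:ℝ)/2) + d ε) - b ε * c ε)⁻¹ •
        !![g * ε ^ ((p₂:ℝ)/2) + d ε, -(b ε); -(c ε), l * ε ^ ((p₁:ℝ)/2) + a ε] := by
    rw [Matrix.inv_def, hdet_eq, Ring.inverse_eq_inv]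
    congr 1
    simp [linMatrix, Matrix.adjugate_fin_two_of]
  -- key bound
  have key : ∀ x : ℝ, |x| ≤ (3/2*(l+g)+C) * ε ^ ((p₁:ℝ)/2) →
      |((l * ε ^ ((p₁:ℝ)/2) + a ε) * (g * ε ^ ((p₂:ℝ)/2) + d ε) - b ε * c ε)⁻¹ * x| ≤
        (3/2*(l+g)+C)/(l*g/8) * ε ^ (-(p₂:ℝ)/2) := by
    intro x hx
    rw [abs_mul, abs_inv, abs_of_pos hdet_pos, inv_mul_le_iff₀ hdet_pos]
    have hKpos : (0:ℝ) < (3/2*(l+g)+C)/(l*g/8) * ε ^ (-(p₂:ℝ)/2) := by positivity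
    calc |x| ≤ (3/2*(l+g)+C) * ε ^ ((p₁:ℝ)/2) := hx
      _ = (l*g/8 * ε ^ ((p₁:ℝ)/2 + (p₂:ℝ)/2)) * ((3/2*(l+g)+C)/(l*g/8) * ε ^ (-(p₂:ℝ)/2)) := by
          rw [show (l*g/8 * ε ^ ((p₁:ℝ)/2 + (p₂:ℝ)/2)) * ((3/2*(l+g)+C)/(l*g/8) * ε ^ (-(p₂:ℝ)/2))
            = (l*g/8 * ((3/2*(l+g)+C)/(l*g/8))) * (ε ^ ((p₁:ℝ)/2 + (p₂:ℝ)/2) * ε ^ (-(p₂:ℝ)/2)) by ring,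
            ← Real.rpow_add hε, show ((p₁:ℝ)/2 + (p₂:ℝ)/2 + -(p₂:ℝ)/2) = (p₁:ℝ)/2 by ring]
          have : l*g/8 * ((3/2*(l+g)+C)/(l*g/8)) = 3/2*(l+g)+C := by field_simp
          rw [this]
      _ ≤ ((l * ε ^ ((p₁:ℝ)/2) + a ε) * (g * ε ^ ((p₂:ℝ)/2) + d ε) - b ε * c ε) *
            ((3/2*(l+g)+C)/(l*g/8) * ε ^ (-(p₂:ℝ)/2)) :=
          mul_le_mul_of_nonneg_right hdet_lo hKpos.le
  intro i j
  rw [hinv]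
  fin_cases i <;> fin_cases j <;>
    simp only [Matrix.smul_apply, Matrix.cons_val', Matrix.cons_val_zero, Matrix.cons_val_one,
      Matrix.head_cons, Matrix.empty_val', Matrix.cons_val_fin_one, Matrix.head_fin_const,
      smul_eq_mul, Fin.zero_eta, Fin.mk_one]
  · exact key _ hD_abs
  · exact key (-(b ε)) (by rw [abs_neg]; exact hb_abs)
  · exact key (-(c ε)) (by rw [abs_neg]; exact hc_abs)
  · exact key _ hA_abs
end
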